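/- Vanishing of the off-diagonal quadratic term: In the triangular array setup, for every pair of coordinates 1 ≤ j, l ≤ p, (Km)^{−1} Σ_{k=1}^K Σ_{1 ≤ i₁ ≠ i₂ ≤ m} η_{k i₁ j} η_{k i₂ l} converges to 0 in probability as K → ∞ and m → ∞, where η_{kij} denotes the j-th coordinate of η_{ki}. -/

import Mathlib

/-!
Put `X = η_{··j}`, `Y = η_{··l}` and `S = ∑_k ∑_{i₁ ≠ i₂} X_{k i₁} Y_{k i₂}`. Expanding `E[S²]`
gives fourth-order moments `E[X_a Y_b X_c Y_d]`, and by independence and centring such a moment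
vanishes as soon as one of the indices `a, b, c, d` occurs only once. Since `i₁ ≠ i₂`, a triple
`(k, i₁, i₂)` then only interacts with itself and with `(k, i₂, i₁)`, and each surviving moment is
at most `E‖η‖⁴` by AM-GM. Hence `E[S²] ≤ 2 E‖η‖⁴ K m²`, so `E[(S / Km)²] ≤ 2 E‖η‖⁴ / K → 0`, and
convergence in `L²` implies convergence in probability.
-/

open MeasureTheory ProbabilityTheory Filter Topology Finset

lemma four_mul_abs_mul_mul_mul_le (a b c d : ℝ) :
    4 * |a * b * (c * d)| ≤ a ^ 4 + b ^ 4 + c ^ 4 + d ^ 4 := by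
  have amgm : ∀ x y z w : ℝ, 4 * (x * y * (z * w)) ≤ x ^ 4 + y ^ 4 + z ^ 4 + w ^ 4 :=
    fun x y z w => by
      nlinarith [sq_nonneg (x * y - z * w), sq_nonneg (x ^ 2 - y ^ 2), sq_nonneg (z ^ 2 - w ^ 2)]
  have even_four : Even 4 := by decide
  simpa only [abs_mul, even_four.pow_abs] using amgm |a| |b| |c| |d|

section Moments

variable {Ω : Type*} [MeasurableSpace Ω] {μ : Measure Ω} {X₁ X₂ X₃ X₄ : Ω → ℝ}

lemma integrable_mul_mul_mul_of_integrable_pow_four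
    (h₁ : AEStronglyMeasurable X₁ μ) (h₂ : AEStronglyMeasurable X₂ μ)
    (h₃ : AEStronglyMeasurable X₃ μ) (h₄ : AEStronglyMeasurable X₄ μ)
    (i₁ : Integrable (fun ω => X₁ ω ^ 4) μ) (i₂ : Integrable (fun ω => X₂ ω ^ 4) μ)
    (i₃ : Integrable (fun ω => X₃ ω ^ 4) μ) (i₄ : Integrable (fun ω => X₄ ω ^ 4) μ) :
    Integrable (fun ω => X₁ ω * X₂ ω * (X₃ ω * X₄ ω)) μ := by
  refine Integrable.mono' ((((i₁.add i₂).add i₃).add i₄).div_const 4)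
    ((h₁.mul h₂).mul (h₃.mul h₄)) (ae_of_all _ fun ω => ?_)
  have := four_mul_abs_mul_mul_mul_le (X₁ ω) (X₂ ω) (X₃ ω) (X₄ ω)
  simp only [Real.norm_eq_abs, Pi.add_apply]
  linarith

lemma integral_mul_mul_mul_le_of_integral_pow_four_le {C : ℝ}
    (h₁ : AEStronglyMeasurable X₁ μ) (h₂ : AEStronglyMeasurable X₂ μ)
    (h₃ : AEStronglyMeasurable X₃ μ) (h₄ : AEStronglyMeasurable X₄ μ)
    (i₁ : Integrable (fun ω => X₁ ω ^ 4) μ) (i₂ : Integrable (fun ω => X₂ ω ^ 4) μ)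
    (i₃ : Integrable (fun ω => X₃ ω ^ 4) μ) (i₄ : Integrable (fun ω => X₄ ω ^ 4) μ)
    (c₁ : ∫ ω, X₁ ω ^ 4 ∂μ ≤ C) (c₂ : ∫ ω, X₂ ω ^ 4 ∂μ ≤ C)
    (c₃ : ∫ ω, X₃ ω ^ 4 ∂μ ≤ C) (c₄ : ∫ ω, X₄ ω ^ 4 ∂μ ≤ C) :
    ∫ ω, X₁ ω * X₂ ω * (X₃ ω * X₄ ω) ∂μ ≤ C := by
  calc ∫ ω, X₁ ω * X₂ ω * (X₃ ω * X₄ ω) ∂μ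
      ≤ ∫ ω, (X₁ ω ^ 4 + X₂ ω ^ 4 + X₃ ω ^ 4 + X₄ ω ^ 4) / 4 ∂μ := by
        refine integral_mono
          (integrable_mul_mul_mul_of_integrable_pow_four h₁ h₂ h₃ h₄ i₁ i₂ i₃ i₄)
          ((((i₁.add i₂).add i₃).add i₄).div_const 4) fun ω => ?_
        have := four_mul_abs_mul_mul_mul_le (X₁ ω) (X₂ ω) (X₃ ω) (X₄ ω)
        have := le_abs_self (X₁ ω * X₂ ω * (X₃ ω * X₄ ω))
        dsimp only
        linarith
    _ = ((∫ ω, X₁ ω ^ 4 ∂μ) + (∫ ω, X₂ ω ^ 4 ∂μ) + (∫ ω, X₃ ω ^ 4 ∂μ) +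
          ∫ ω, X₄ ω ^ 4 ∂μ) / 4 := by
        rw [integral_div, integral_add, integral_add, integral_add]
        exacts [i₁, i₂, i₁.add i₂, i₃, (i₁.add i₂).add i₃, i₄]
    _ ≤ C := by linarith

lemma integral_sq_sum_eq {τ : Type*} {s : Finset τ} {Z : τ → Ω → ℝ}
    (hZ : ∀ q r, Integrable (fun ω => Z q ω * Z r ω) μ) :
    ∫ ω, (∑ q ∈ s, Z q ω) ^ 2 ∂μ = ∑ q ∈ s, ∑ r ∈ s, ∫ ω, Z q ω * Z r ω ∂μ := by
  simp_rw [sq, sum_mul_sum]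
  rw [integral_finsetSum _ fun q _ => integrable_finsetSum _ fun r _ => hZ q r]
  exact sum_congr rfl fun q _ => integral_finsetSum _ fun r _ => hZ q r

lemma integrable_sq_sum {τ : Type*} {s : Finset τ} {Z : τ → Ω → ℝ}
    (hZ : ∀ q r, Integrable (fun ω => Z q ω * Z r ω) μ) :
    Integrable (fun ω => (∑ q ∈ s, Z q ω) ^ 2) μ := by
  simp_rw [sq, sum_mul_sum]
  exact integrable_finsetSum _ fun q _ => integrable_finsetSum _ fun r _ => hZ q r

end Moments

lemma tendstoInMeasure_zero_of_integral_sq_le {Ω ι : Type*} [MeasurableSpace Ω] {μ : Measure Ω}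
    {l : Filter ι} {F : ι → Ω → ℝ} {b : ι → ℝ} (hF : ∀ i, AEStronglyMeasurable (F i) μ)
    (hF2 : ∀ i, Integrable (fun ω => F i ω ^ 2) μ) (hle : ∀ᶠ i in l, ∫ ω, F i ω ^ 2 ∂μ ≤ b i)
    (hb : Tendsto b l (𝓝 0)) :
    TendstoInMeasure μ F l 0 := by
  refine tendstoInMeasure_of_tendsto_eLpNorm two_ne_zero hF aestronglyMeasurable_const ?_
  have hnorm : ∀ i, eLpNorm (F i - 0) 2 μ = ENNReal.ofReal (√(∫ ω, F i ω ^ 2 ∂μ)) := by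
    intro i
    rw [sub_zero, ((memLp_two_iff_integrable_sq (hF i)).2 (hF2 i)).eLpNorm_eq_integral_rpow_norm
      two_ne_zero ENNReal.ofNat_ne_top, Real.sqrt_eq_rpow]
    simp
  have hlim : Tendsto (fun i => ENNReal.ofReal (√(b i))) l (𝓝 0) := by
    simpa using ENNReal.tendsto_ofReal hb.sqrt
  simp_rw [hnorm]
  refine tendsto_of_tendsto_of_tendsto_of_le_of_le' tendsto_const_nhds hlim
    (Eventually.of_forall fun _ => zero_le) ?_
  filter_upwards [hle] with i hi
  exact ENNReal.ofReal_le_ofReal (Real.sqrt_le_sqrt hi)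

lemma ProbabilityTheory.iIndepFun.integral_mul_eq_zero_of_ne {Ω ι E : Type*} [MeasurableSpace Ω]
    {μ : Measure Ω} [MeasurableSpace E] {η : ι → Ω → E} (hη : iIndepFun η μ)
    (hmeas : ∀ i, Measurable (η i)) {a b c d : ι} (hab : a ≠ b) (hac : a ≠ c) (had : a ≠ d)
    {f : E → ℝ} (hf : Measurable f) (hf₀ : ∫ ω, f (η a ω) ∂μ = 0) {G : E × E × E → ℝ}
    (hG : Measurable G) :
    ∫ ω, f (η a ω) * G (η b ω, η c ω, η d ω) ∂μ = 0 := by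
  classical
  have hb : b ∈ ({b, c, d} : Finset ι) := by simp
  have hc : c ∈ ({b, c, d} : Finset ι) := by simp
  have hd : d ∈ ({b, c, d} : Finset ι) := by simp
  have hdisj : Disjoint ({a} : Finset ι) {b, c, d} := by simp [hab, hac, had]
  have hindep : IndepFun (fun ω => f (η a ω)) (fun ω => G (η b ω, η c ω, η d ω)) μ :=
    (hη.indepFun_finset {a} {b, c, d} hdisj hmeas).comp
      (φ := fun v : ({a} : Finset ι) → E => f (v ⟨a, mem_singleton_self a⟩))
      (ψ := fun v : ({b, c, d} : Finset ι) → E => G (v ⟨b, hb⟩, v ⟨c, hc⟩, v ⟨d, hd⟩))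
      (by fun_prop) (by fun_prop)
  rw [hindep.integral_fun_mul_eq_mul_integral (hf.comp (hmeas a)).aestronglyMeasurable
    (hG.comp (((hmeas b).prodMk ((hmeas c).prodMk (hmeas d))))).aestronglyMeasurable, hf₀,
    zero_mul]

namespace EuclideanSpace

variable {Ω ι : Type*} [MeasurableSpace Ω] {μ : Measure Ω} [Fintype ι]
  {ξ : Ω → EuclideanSpace ℝ ι}

lemma apply_pow_four_le (x : EuclideanSpace ℝ ι) (c : ι) :
    x c ^ 4 ≤ ‖x‖ ^ 4 := by
  rw [← (by decide : Even 4).pow_abs]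
  exact pow_le_pow_left₀ (abs_nonneg _) (PiLp.norm_apply_le x c) 4

lemma integrable_apply_pow_four (hξ : AEStronglyMeasurable ξ μ)
    (h4 : Integrable (fun ω => ‖ξ ω‖ ^ 4) μ) (c : ι) :
    Integrable (fun ω => ξ ω c ^ 4) μ := by
  refine h4.mono' (by fun_prop) (ae_of_all _ fun ω => ?_)
  rw [Real.norm_eq_abs, abs_of_nonneg (by positivity)]
  exact apply_pow_four_le (ξ ω) c

lemma integral_apply_pow_four_le (hξ : AEStronglyMeasurable ξ μ)
    (h4 : Integrable (fun ω => ‖ξ ω‖ ^ 4) μ) (c : ι) :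
    ∫ ω, ξ ω c ^ 4 ∂μ ≤ ∫ ω, ‖ξ ω‖ ^ 4 ∂μ :=
  integral_mono (integrable_apply_pow_four hξ h4 c) h4
    fun ω => apply_pow_four_le (ξ ω) c

lemma integral_apply_eq_zero [IsFiniteMeasure μ] (hξ : AEStronglyMeasurable ξ μ)
    (h4 : Integrable (fun ω => ‖ξ ω‖ ^ 4) μ) (h0 : ∫ ω, ξ ω ∂μ = 0) (c : ι) :
    ∫ ω, ξ ω c ∂μ = 0 := by
  have hL4 : MemLp ξ 4 μ := by
    rw [← integrable_norm_rpow_iff hξ (by norm_num) (by norm_num)]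
    simpa using h4
  simpa [h0] using (proj (𝕜 := ℝ) c).integral_comp_comm (hL4.integrable (by norm_num))

end EuclideanSpace

section OffDiagonal

variable {Ω : Type*}

def offDiagTerm (X Y : ℕ × ℕ → Ω → ℝ) (q : ℕ × ℕ × ℕ) (ω : Ω) : ℝ :=
  X (q.1, q.2.1) ω * Y (q.1, q.2.2) ω

def offDiagSum (X Y : ℕ × ℕ → Ω → ℝ) (K m : ℕ) (ω : Ω) : ℝ :=
  ∑ k ∈ range K, ∑ i₁ ∈ range m, ∑ i₂ ∈ (range m).erase i₁, X (k, i₁) ω * Y (k, i₂) ω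

lemma offDiagSum_eq_sum_offDiagTerm (X Y : ℕ × ℕ → Ω → ℝ) (K m : ℕ) (ω : Ω) :
    offDiagSum X Y K m ω = ∑ q ∈ range K ×ˢ (range m).offDiag, offDiagTerm X Y q ω := by
  rw [sum_product]
  refine sum_congr rfl fun k _ => ?_
  rw [sum_finset_product _ _ _ fun q => ?_]
  · rfl
  · simp only [mem_offDiag, mem_erase]
    tauto

lemma measurable_offDiagSum [MeasurableSpace Ω] {X Y : ℕ × ℕ → Ω → ℝ}
    (hX : ∀ t, Measurable (X t)) (hY : ∀ t, Measurable (Y t)) (K m : ℕ) :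
    Measurable (offDiagSum X Y K m) := by
  unfold offDiagSum
  fun_prop

lemma unpaired_index_of_ne {k i₁ i₂ k' i₃ i₄ : ℕ} (h₃₄ : i₃ ≠ i₄)
    (hne : (k', i₃, i₄) ≠ (k, i₁, i₂)) (hne' : (k', i₃, i₄) ≠ (k, i₂, i₁)) :
    ((k, i₁) ≠ (k, i₂) ∧ (k, i₁) ≠ (k', i₃) ∧ (k, i₁) ≠ (k', i₄)) ∨
    ((k, i₂) ≠ (k, i₁) ∧ (k, i₂) ≠ (k', i₃) ∧ (k, i₂) ≠ (k', i₄)) ∨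
    ((k', i₃) ≠ (k, i₁) ∧ (k', i₃) ≠ (k, i₂) ∧ (k', i₃) ≠ (k', i₄)) ∨
    ((k', i₄) ≠ (k, i₁) ∧ (k', i₄) ≠ (k, i₂) ∧ (k', i₄) ≠ (k', i₃)) := by
  simp only [ne_eq, Prod.mk.injEq] at *
  omega

/-- `X i` and `Y i` may depend on each other; only the pairs `(X i, Y i)` are independent across
`i`. -/
structure IndepCenteredL4 {ι : Type*} [MeasurableSpace Ω] (μ : Measure Ω) (X Y : ι → Ω → ℝ)
    (C : ℝ) : Prop where
  indep : iIndepFun (fun i ω => (X i ω, Y i ω)) μ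
  measurable_left : ∀ i, Measurable (X i)
  measurable_right : ∀ i, Measurable (Y i)
  integral_left : ∀ i, ∫ ω, X i ω ∂μ = 0
  integral_right : ∀ i, ∫ ω, Y i ω ∂μ = 0
  integrable_left_pow_four : ∀ i, Integrable (fun ω => X i ω ^ 4) μ
  integrable_right_pow_four : ∀ i, Integrable (fun ω => Y i ω ^ 4) μ
  integral_left_pow_four_le : ∀ i, ∫ ω, X i ω ^ 4 ∂μ ≤ C
  integral_right_pow_four_le : ∀ i, ∫ ω, Y i ω ^ 4 ∂μ ≤ C

namespace IndepCenteredL4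

variable [MeasurableSpace Ω] {μ : Measure Ω} {C : ℝ}

lemma nonneg {ι : Type*} [Nonempty ι] {X Y : ι → Ω → ℝ} (h : IndepCenteredL4 μ X Y C) :
    0 ≤ C :=
  (integral_nonneg fun ω => by positivity).trans
    (h.integral_left_pow_four_le (Classical.arbitrary ι))

variable {X Y : ℕ × ℕ → Ω → ℝ}

lemma integrable_offDiagTerm_mul (h : IndepCenteredL4 μ X Y C) (q r : ℕ × ℕ × ℕ) :
    Integrable (fun ω => offDiagTerm X Y q ω * offDiagTerm X Y r ω) μ :=
  integrable_mul_mul_mul_of_integrable_pow_four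
    (h.measurable_left _).aestronglyMeasurable (h.measurable_right _).aestronglyMeasurable
    (h.measurable_left _).aestronglyMeasurable (h.measurable_right _).aestronglyMeasurable
    (h.integrable_left_pow_four _) (h.integrable_right_pow_four _)
    (h.integrable_left_pow_four _) (h.integrable_right_pow_four _)

lemma integral_offDiagTerm_mul_le (h : IndepCenteredL4 μ X Y C) (q r : ℕ × ℕ × ℕ) :
    ∫ ω, offDiagTerm X Y q ω * offDiagTerm X Y r ω ∂μ ≤ C :=
  integral_mul_mul_mul_le_of_integral_pow_four_le
    (h.measurable_left _).aestronglyMeasurable (h.measurable_right _).aestronglyMeasurable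
    (h.measurable_left _).aestronglyMeasurable (h.measurable_right _).aestronglyMeasurable
    (h.integrable_left_pow_four _) (h.integrable_right_pow_four _)
    (h.integrable_left_pow_four _) (h.integrable_right_pow_four _)
    (h.integral_left_pow_four_le _) (h.integral_right_pow_four_le _)
    (h.integral_left_pow_four_le _) (h.integral_right_pow_four_le _)

lemma integral_offDiagTerm_mul_eq_zero (h : IndepCenteredL4 μ X Y C) {q r : ℕ × ℕ × ℕ}
    (hr : r.2.1 ≠ r.2.2) (hrq : r ≠ q) (hrq' : r ≠ (q.1, q.2.2, q.2.1)) :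
    ∫ ω, offDiagTerm X Y q ω * offDiagTerm X Y r ω ∂μ = 0 := by
  obtain ⟨k, i₁, i₂⟩ := q
  obtain ⟨k', i₃, i₄⟩ := r
  have hmeas i : Measurable fun ω => (X i ω, Y i ω) :=
    (h.measurable_left i).prodMk (h.measurable_right i)
  simp only [offDiagTerm]
  rcases unpaired_index_of_ne hr hrq hrq' with ⟨ha, hb, hc⟩ | ⟨ha, hb, hc⟩ | ⟨ha, hb, hc⟩ |
    ⟨ha, hb, hc⟩
  · calc _ = ∫ ω, X (k, i₁) ω * (Y (k, i₂) ω * (X (k', i₃) ω * Y (k', i₄) ω)) ∂μ := by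
          simp only [mul_assoc]
      _ = 0 := h.indep.integral_mul_eq_zero_of_ne hmeas ha hb hc
          measurable_fst (h.integral_left _)
          (G := fun x => x.1.2 * (x.2.1.1 * x.2.2.2)) (by fun_prop)
  · calc _ = ∫ ω, Y (k, i₂) ω * (X (k, i₁) ω * (X (k', i₃) ω * Y (k', i₄) ω)) ∂μ := by
          congr 1; ext ω; ring
      _ = 0 := h.indep.integral_mul_eq_zero_of_ne hmeas ha hb hc
          measurable_snd (h.integral_right _)
          (G := fun x => x.1.1 * (x.2.1.1 * x.2.2.2)) (by fun_prop)
  · calc _ = ∫ ω, X (k', i₃) ω * (X (k, i₁) ω * (Y (k, i₂) ω * Y (k', i₄) ω)) ∂μ := by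
          congr 1; ext ω; ring
      _ = 0 := h.indep.integral_mul_eq_zero_of_ne hmeas ha hb hc
          measurable_fst (h.integral_left _)
          (G := fun x => x.1.1 * (x.2.1.2 * x.2.2.2)) (by fun_prop)
  · calc _ = ∫ ω, Y (k', i₄) ω * (X (k, i₁) ω * (Y (k, i₂) ω * X (k', i₃) ω)) ∂μ := by
          congr 1; ext ω; ring
      _ = 0 := h.indep.integral_mul_eq_zero_of_ne hmeas ha hb hc
          measurable_snd (h.integral_right _)
          (G := fun x => x.1.1 * (x.2.1.2 * x.2.2.1)) (by fun_prop)

lemma sum_integral_offDiagTerm_mul_le (h : IndepCenteredL4 μ X Y C) {T : Finset (ℕ × ℕ × ℕ)}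
    (hT : ∀ r ∈ T, r.2.1 ≠ r.2.2) (q : ℕ × ℕ × ℕ) :
    ∑ r ∈ T, ∫ ω, offDiagTerm X Y q ω * offDiagTerm X Y r ω ∂μ ≤ 2 * C := by
  classical
  set partners : Finset (ℕ × ℕ × ℕ) := {q, (q.1, q.2.2, q.2.1)}
  have hsupp : ∀ r ∈ T, ∫ ω, offDiagTerm X Y q ω * offDiagTerm X Y r ω ∂μ ≠ 0 →
      r ∈ partners := by
    intro r hr hne
    by_contra hnot
    simp only [partners, mem_insert, mem_singleton, not_or] at hnot
    exact hne (h.integral_offDiagTerm_mul_eq_zero (hT r hr) hnot.1 hnot.2)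
  have hcard : #(T.filter (· ∈ partners)) ≤ 2 :=
    (card_le_card fun r hr => (mem_filter.1 hr).2).trans card_le_two
  calc ∑ r ∈ T, ∫ ω, offDiagTerm X Y q ω * offDiagTerm X Y r ω ∂μ
      = ∑ r ∈ T.filter (· ∈ partners), ∫ ω, offDiagTerm X Y q ω * offDiagTerm X Y r ω ∂μ :=
        (sum_filter_of_ne hsupp).symm
    _ ≤ ∑ r ∈ T.filter (· ∈ partners), C :=
        sum_le_sum fun r _ => h.integral_offDiagTerm_mul_le q r
    _ = #(T.filter (· ∈ partners)) * C := by rw [sum_const, nsmul_eq_mul]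
    _ ≤ 2 * C := by gcongr; exacts [h.nonneg, mod_cast hcard]

lemma integrable_offDiagSum_sq (h : IndepCenteredL4 μ X Y C) (K m : ℕ) :
    Integrable (fun ω => offDiagSum X Y K m ω ^ 2) μ := by
  simp_rw [offDiagSum_eq_sum_offDiagTerm]
  exact integrable_sq_sum h.integrable_offDiagTerm_mul

lemma integral_offDiagSum_sq_le (h : IndepCenteredL4 μ X Y C) (K m : ℕ) :
    ∫ ω, offDiagSum X Y K m ω ^ 2 ∂μ ≤ 2 * C * (K * m ^ 2) := by
  set T := range K ×ˢ (range m).offDiag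
  have hT : ∀ r ∈ T, r.2.1 ≠ r.2.2 := fun r hr => (mem_offDiag.1 (mem_product.1 hr).2).2.2
  have hcard : (#T : ℝ) ≤ K * m ^ 2 := by
    have : #T ≤ K * m ^ 2 := by
      rw [card_product, card_range, offDiag_card, card_range, sq]
      exact Nat.mul_le_mul_left K (Nat.sub_le _ _)
    exact_mod_cast this
  simp_rw [offDiagSum_eq_sum_offDiagTerm]
  rw [integral_sq_sum_eq h.integrable_offDiagTerm_mul]
  calc ∑ q ∈ T, ∑ r ∈ T, ∫ ω, offDiagTerm X Y q ω * offDiagTerm X Y r ω ∂μ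
      ≤ ∑ q ∈ T, 2 * C := sum_le_sum fun q _ => h.sum_integral_offDiagTerm_mul_le hT q
    _ = #T * (2 * C) := by rw [sum_const, nsmul_eq_mul]
    _ ≤ K * m ^ 2 * (2 * C) := by gcongr; linarith [h.nonneg]
    _ = 2 * C * (K * m ^ 2) := by ring

theorem tendstoInMeasure_offDiagSum (h : IndepCenteredL4 μ X Y C) :
    TendstoInMeasure μ
      (fun (Km : ℕ × ℕ) (ω : Ω) => ((Km.1 : ℝ) * Km.2)⁻¹ * offDiagSum X Y Km.1 Km.2 ω)
      (atTop ×ˢ atTop) 0 := by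
  refine tendstoInMeasure_zero_of_integral_sq_le (b := fun Km => 2 * C / Km.1)
    (fun Km => ((measurable_offDiagSum h.measurable_left h.measurable_right _ _).const_mul
      _).aestronglyMeasurable)
    (fun Km => by simpa only [mul_pow] using (h.integrable_offDiagSum_sq _ _).const_mul _) ?_
    ((tendsto_const_div_atTop_nhds_zero_nat _).comp tendsto_fst)
  filter_upwards [(eventually_ge_atTop 1).prod_inl atTop, (eventually_ge_atTop 1).prod_inr atTop]
    with ⟨K, m⟩ (hK : 1 ≤ K) (hm : 1 ≤ m)
  have hK' : (0 : ℝ) < K := by exact_mod_cast hK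
  have hm' : (0 : ℝ) < m := by exact_mod_cast hm
  calc ∫ ω, (((K : ℝ) * m)⁻¹ * offDiagSum X Y K m ω) ^ 2 ∂μ
      = ((K : ℝ) * m)⁻¹ ^ 2 * ∫ ω, offDiagSum X Y K m ω ^ 2 ∂μ := by
        rw [← integral_const_mul]; simp only [mul_pow]
    _ ≤ ((K : ℝ) * m)⁻¹ ^ 2 * (2 * C * (K * m ^ 2)) := by
        gcongr; exact h.integral_offDiagSum_sq_le K m
    _ = 2 * C / K := by field_simp

end IndepCenteredL4

end OffDiagonal

lemma IndepCenteredL4.of_identDistrib {Ω κ ι : Type*} [MeasurableSpace Ω] {μ : Measure Ω}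
    [IsFiniteMeasure μ] [Fintype ι] {η : κ → Ω → EuclideanSpace ℝ ι}
    (hmeas : ∀ i, Measurable (η i)) (hindep : iIndepFun η μ) {i₀ : κ}
    (hident : ∀ i, IdentDistrib (η i) (η i₀) μ μ) (hmean : ∫ ω, η i₀ ω ∂μ = 0)
    (hmom4 : Integrable (fun ω => ‖η i₀ ω‖ ^ 4) μ) (j l : ι) :
    IndepCenteredL4 μ (fun i ω => η i ω j) (fun i ω => η i ω l) (∫ ω, ‖η i₀ ω‖ ^ 4 ∂μ) := by
  have h₀ : AEStronglyMeasurable (η i₀) μ := (hmeas i₀).aestronglyMeasurable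
  have hcoord (c : ι) (i : κ) : ∫ ω, η i ω c ∂μ = 0 ∧ Integrable (fun ω => η i ω c ^ 4) μ ∧
      ∫ ω, η i ω c ^ 4 ∂μ ≤ ∫ ω, ‖η i₀ ω‖ ^ 4 ∂μ := by
    have hc : IdentDistrib (fun ω => η i ω c) (fun ω => η i₀ ω c) μ μ :=
      (hident i).comp (u := fun x : EuclideanSpace ℝ ι => x c) (by fun_prop)
    have hc4 : IdentDistrib (fun ω => η i ω c ^ 4) (fun ω => η i₀ ω c ^ 4) μ μ :=
      hc.comp (u := fun x => x ^ 4) (by fun_prop)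
    exact ⟨hc.integral_eq.trans (EuclideanSpace.integral_apply_eq_zero h₀ hmom4 hmean c),
      hc4.integrable_iff.2 (EuclideanSpace.integrable_apply_pow_four h₀ hmom4 c),
      hc4.integral_eq.trans_le (EuclideanSpace.integral_apply_pow_four_le h₀ hmom4 c)⟩
  exact
    { indep := hindep.comp (fun _ x => (x j, x l)) fun _ => by fun_prop
      measurable_left := fun i => by fun_prop
      measurable_right := fun i => by fun_prop
      integral_left := fun i => (hcoord j i).1
      integral_right := fun i => (hcoord l i).1
      integrable_left_pow_four := fun i => (hcoord j i).2.1
      integrable_right_pow_four := fun i => (hcoord l i).2.1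
      integral_left_pow_four_le := fun i => (hcoord j i).2.2
      integral_right_pow_four_le := fun i => (hcoord l i).2.2 }

theorem offdiagonal_quadratic_term_vanishes_general
    {p : ℕ}
    {Ω : Type} [MeasureSpace Ω] [IsProbabilityMeasure (ℙ : Measure Ω)]
    (η : ℕ × ℕ → Ω → EuclideanSpace ℝ (Fin p))
    (hmeas : ∀ ki, Measurable (η ki))
    (hindep : iIndepFun η ℙ)
    (hident : ∀ ki, IdentDistrib (η ki) (η (0, 0)) ℙ ℙ)
    (hmean : ∫ ω, η (0, 0) ω ∂ℙ = 0)
    (hmom4 : Integrable (fun ω => ‖η (0, 0) ω‖ ^ 4) ℙ)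
    :
    ∀ j l : Fin p,
      TendstoInMeasure ℙ
        (fun (Km : ℕ × ℕ) (ω : Ω) =>
          ((Km.1 : ℝ) * (Km.2 : ℝ))⁻¹ * ∑ k ∈ Finset.range Km.1,
            ∑ i₁ ∈ Finset.range Km.2, ∑ i₂ ∈ (Finset.range Km.2).erase i₁,
              η (k, i₁) ω j * η (k, i₂) ω l)
        (atTop ×ˢ atTop) 0 := fun j l =>
  (IndepCenteredL4.of_identDistrib hmeas hindep hident hmean hmom4 j l).tendstoInMeasure_offDiagSum

/-- **Vanishing of the off-diagonal quadratic term**. In the triangular array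
setup, for all coordinates `j, l`,
`(Km)⁻¹ ∑_{k<K} ∑_{i₁ ≠ i₂ < m} η_{k i₁ j} η_{k i₂ l}` converges to `0` in
probability as `K, m → ∞`. -/
theorem offdiagonal_quadratic_term_vanishes
    {p : ℕ} (hp : 1 ≤ p)
    {Ω : Type} [MeasureSpace Ω] [IsProbabilityMeasure (ℙ : Measure Ω)]
    (η : ℕ × ℕ → Ω → EuclideanSpace ℝ (Fin p))
    (hmeas : ∀ ki, Measurable (η ki))
    (hindep : iIndepFun η ℙ)
    (hident : ∀ ki, IdentDistrib (η ki) (η (0, 0)) ℙ ℙ)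
    (hmean : ∫ ω, η (0, 0) ω ∂ℙ = 0)
    (hmom4 : Integrable (fun ω => ‖η (0, 0) ω‖ ^ 4) ℙ)
    (covM : Matrix (Fin p) (Fin p) ℝ)
    (hcov : ∀ j l, covM j l = ∫ ω, η (0, 0) ω j * η (0, 0) ω l ∂ℙ)
    (hns : covM.det ≠ 0)
    :
    ∀ j l : Fin p,
      TendstoInMeasure ℙ
        (fun (Km : ℕ × ℕ) (ω : Ω) =>
          ((Km.1 : ℝ) * (Km.2 : ℝ))⁻¹ * ∑ k ∈ Finset.range Km.1,
            ∑ i₁ ∈ Finset.range Km.2, ∑ i₂ ∈ (Finset.range Km.2).erase i₁,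
              η (k, i₁) ω j * η (k, i₂) ω l)
        (atTop ×ˢ atTop) 0 :=
  offdiagonal_quadratic_term_vanishes_general η hmeas hindep hident hmean hmom4
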